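/- Let q be a prime power with q > 2. If g is an automorphism of the graph NU(3,q^2) commuting with every automorphism of NU(3,q^2) induced by an F-linear bijection of F^3 that preserves H(2,q^2), then g is the identity; that is, the centralizer in Aut(NU(3,q^2)) of the subgroup of automorphisms induced by linear collineations stabilizing H(2,q^2) is trivial. -/

import Mathlib

open Projectivization
open scoped LinearAlgebra.Projectivization

variable (F : Type) [Field F] [Fintype F]

/-- The projective space PG(n, |F|) over `F`, as the projectivization of `Fin (n+1) → F`. -/
abbrev PG (n : ℕ) := ℙ F (Fin (n+1) → F)

/-- The Hermitian variety `H(n,q^2)`: points `[x_0 : ... : x_n]` with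
`x_0^{q+1} + ... + x_n^{q+1} = 0`. -/
def Herm (q n : ℕ) : Set (PG F n) :=
  {p | ∑ i, (p.rep i) ^ (q+1) = 0}

/-- The set of points of `PG(n,q^2)` lying on the line given by a `2`-dimensional subspace. -/
def lineSet (n : ℕ) (W : Submodule F (Fin (n+1) → F)) : Set (PG F n) :=
  {p | p.submodule ≤ W}

/-- `W` determines a line of `PG(n,q^2)`, i.e. it is a `2`-dimensional subspace. -/
def IsLine (n : ℕ) (W : Submodule F (Fin (n+1) → F)) : Prop :=
  Module.finrank F W = 2

/-- A line is tangent to `H(n,q^2)` if it meets it in exactly one point. -/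
def IsTangent (q n : ℕ) (W : Submodule F (Fin (n+1) → F)) : Prop :=
  IsLine F n W ∧ (lineSet F n W ∩ Herm F q n).ncard = 1

/-- The graph `NU(n+1,q^2)`: vertices are points off the Hermitian variety, two distinct
vertices adjacent iff the line joining them is tangent to `H(n,q^2)`. -/
def NU (q n : ℕ) : SimpleGraph {p : PG F n // p ∉ Herm F q n} where
  Adj u v := u ≠ v ∧ IsTangent F q n (Submodule.span F {u.1.rep, v.1.rep})
  symm := by
    refine ⟨?_⟩
    rintro u v ⟨h1, h2⟩
    exact ⟨h1.symm, by rwa [Set.pair_comm]⟩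
  loopless := ⟨fun u h => h.1 rfl⟩

/-- A strongly regular graph with parameters `(v, k, l, m)`. -/
def IsSRG {V : Type} (G : SimpleGraph V) (v k l m : ℤ) : Prop :=
  (Nat.card V : ℤ) = v ∧
  (∀ x, (Nat.card (G.neighborSet x) : ℤ) = k) ∧
  (∀ x y, G.Adj x y → (Nat.card (G.commonNeighbors x y) : ℤ) = l) ∧
  (∀ x y, x ≠ y → ¬ G.Adj x y → (Nat.card (G.commonNeighbors x y) : ℤ) = m)

/-- The collineation of `PG(n,q^2)` induced by an `F`-linear bijection of `F^{n+1}`. -/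
noncomputable def inducedMap (n : ℕ) (f : (Fin (n+1) → F) ≃ₗ[F] (Fin (n+1) → F)) :
    PG F n → PG F n :=
  Projectivization.map (f.toLinearMap) f.injective

/-!
For `⟨v, w⟩ = ∑ vᵢ wᵢ ^ q` the vertices are the non-isotropic points. If `g` moved a vertex
`⟨x⟩` to `⟨y⟩`, a unitary map fixing `⟨x⟩` but not `⟨y⟩` would give a contradiction, since `g`
commutes with the automorphism it induces and so maps its fixed vertex `⟨x⟩` to a fixed vertex.
A unitary reflection `v ↦ v + c ⟨v, w⟩ w` with a suitable mirror `w` is such a map: `w = x` if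
`⟨y, x⟩ ≠ 0`, and otherwise `w = y + ε z`, where `z`, the conjugate of `x × y`, is orthogonal to
`x` and `y` and non-isotropic by Lagrange's identity, and `q > 2` leaves a choice of the norm
`ε ^ (q + 1)` that keeps `w` non-isotropic.
-/

section HermForm

variable {K ι : Type*} [Field K] [Fintype ι] (σ : K →+* K)

def hermForm : (ι → K) →ₗ[K] (ι → K) →ₛₗ[σ] K :=
  LinearMap.mk₂'ₛₗ (RingHom.id K) σ (fun x y => ∑ i, x i * σ (y i))
    (fun x x' y => by simp only [Pi.add_apply, add_mul, Finset.sum_add_distrib])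
    (fun c x y => by
      simp only [Pi.smul_apply, smul_eq_mul, mul_assoc, Finset.mul_sum, RingHom.id_apply])
    (fun x y y' => by simp only [Pi.add_apply, map_add, mul_add, Finset.sum_add_distrib])
    (fun c x y => by
      simp only [Pi.smul_apply, smul_eq_mul, map_mul, Finset.mul_sum, mul_left_comm])

lemma hermForm_apply (x y : ι → K) : hermForm σ x y = ∑ i, x i * σ (y i) := rfl

variable {σ}

lemma hermForm_swap (hσ : Function.Involutive σ) (x y : ι → K) :
    σ (hermForm σ x y) = hermForm σ y x := by
  simp [hermForm_apply, map_sum, hσ _, mul_comm]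

lemma hermForm_conj_right (hσ : Function.Involutive σ) (x v : ι → K) :
    hermForm σ x (fun i => σ (v i)) = x ⬝ᵥ v := by
  simp [hermForm_apply, hσ _, dotProduct]

lemma eq_zero_of_forall_hermForm_eq_zero {x : ι → K} (h : ∀ y, hermForm σ x y = 0) : x = 0 := by
  classical
  funext i
  simpa [hermForm_apply, Pi.single_apply] using h (Pi.single i 1)

lemma injective_of_preserves_hermForm {f : (ι → K) →ₗ[K] (ι → K)}
    (hf : ∀ x y, hermForm σ (f x) (f y) = hermForm σ x y) : Function.Injective f := by
  refine (injective_iff_map_eq_zero f).mpr fun x hx =>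
    eq_zero_of_forall_hermForm_eq_zero (σ := σ) fun y => ?_
  rw [← hf, hx, map_zero, LinearMap.zero_apply]

lemma hermForm_smul_smul_eq_zero_iff {a : K} (ha : a ≠ 0) (x : ι → K) :
    hermForm σ (a • x) (a • x) = 0 ↔ hermForm σ x x = 0 := by
  simp [ha]

variable (σ) in
def unitaryReflection (w : ι → K) (c : K) : (ι → K) →ₗ[K] (ι → K) :=
  LinearMap.id + c • ((hermForm σ).flip w).smulRight w

lemma unitaryReflection_apply (w : ι → K) (c : K) (x : ι → K) :
    unitaryReflection σ w c x = x + (c * hermForm σ x w) • w := by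
  simp [unitaryReflection, mul_smul]

lemma unitaryReflection_apply_of_hermForm_eq_zero {w x : ι → K} (c : K)
    (h : hermForm σ x w = 0) : unitaryReflection σ w c x = x := by
  simp [unitaryReflection_apply, h]

lemma unitaryReflection_apply_self (w : ι → K) (c : K) :
    unitaryReflection σ w c w = (1 + c * hermForm σ w w) • w := by
  rw [unitaryReflection_apply, add_smul, one_smul]

lemma hermForm_unitaryReflection (hσ : Function.Involutive σ) {w : ι → K} {c : K}
    (hc : c + σ c + c * σ c * hermForm σ w w = 0) (x y : ι → K) :
    hermForm σ (unitaryReflection σ w c x) (unitaryReflection σ w c y) = hermForm σ x y := by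
  simp only [unitaryReflection_apply, map_add, map_smul, map_smulₛₗ, LinearMap.add_apply,
    LinearMap.smul_apply, smul_eq_mul, map_mul]
  rw [← hermForm_swap hσ y w]
  linear_combination (hermForm σ x w * σ (hermForm σ y w)) * hc

lemma hermForm_unitaryReflection_div (hσ : Function.Involutive σ) {w : ι → K}
    (hw : hermForm σ w w ≠ 0) {l : K} (hl : l * σ l = 1) (x y : ι → K) :
    hermForm σ (unitaryReflection σ w ((l - 1) / hermForm σ w w) x)
      (unitaryReflection σ w ((l - 1) / hermForm σ w w) y) = hermForm σ x y := by
  refine hermForm_unitaryReflection hσ ?_ x y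
  simp only [map_div₀, map_sub, map_one, hermForm_swap hσ w w]
  field_simp
  linear_combination hl

lemma unitaryReflection_apply_notMem_span {w y : ι → K} {c : K} (hc : c ≠ 0)
    (hyw : hermForm σ y w ≠ 0) (hwy : w ∉ K ∙ y) : unitaryReflection σ w c y ∉ K ∙ y := by
  intro h
  have hmem : (c * hermForm σ y w) • w ∈ K ∙ y := by
    simpa [unitaryReflection_apply] using sub_mem h (Submodule.mem_span_singleton_self y)
  exact hwy ((Submodule.smul_mem_iff _ (mul_ne_zero hc hyw)).mp hmem)

end HermForm

section Plane

open Matrix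

variable {K : Type*} [Field K] {σ : K →+* K}

lemma hermForm_conj_cross_self (hσ : Function.Involutive σ) (x y : Fin 3 → K) :
    hermForm σ (fun i => σ ((x ⨯₃ y) i)) (fun i => σ ((x ⨯₃ y) i))
      = hermForm σ x x * hermForm σ y y - hermForm σ x y * hermForm σ y x := by
  simp only [hermForm_apply, cross_apply, Fin.sum_univ_three, Matrix.cons_val_zero,
    Matrix.cons_val_one, Matrix.cons_val_two, Matrix.head_cons, Matrix.tail_cons, map_sub,
    map_mul, hσ _]
  ring

lemma exists_mirror_of_hermForm_eq_zero (hσ : Function.Involutive σ)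
    (hnorm : ∀ a : K, ∃ ε ≠ 0, ε * σ ε ≠ a) {x y : Fin 3 → K}
    (hx : hermForm σ x x ≠ 0) (hy : hermForm σ y y ≠ 0) (hyx : hermForm σ y x = 0) :
    ∃ w, hermForm σ w w ≠ 0 ∧ hermForm σ x w = 0 ∧ hermForm σ y w ≠ 0 ∧ w ∉ K ∙ y := by
  set z : Fin 3 → K := fun i => σ ((x ⨯₃ y) i)
  have hxz : hermForm σ x z = 0 := by rw [hermForm_conj_right hσ, dot_self_cross]
  have hyz : hermForm σ y z = 0 := by rw [hermForm_conj_right hσ, dot_cross_self]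
  have hzy : hermForm σ z y = 0 := by rw [← hermForm_swap hσ, hyz, map_zero]
  have hxy : hermForm σ x y = 0 := by rw [← hermForm_swap hσ, hyx, map_zero]
  have hzz : hermForm σ z z ≠ 0 := by
    rw [hermForm_conj_cross_self hσ, hxy, zero_mul, sub_zero]
    exact mul_ne_zero hx hy
  obtain ⟨ε, hε0, hε⟩ := hnorm (-hermForm σ y y / hermForm σ z z)
  refine ⟨y + ε • z, ?_, ?_, ?_, ?_⟩
  · have hww : hermForm σ (y + ε • z) (y + ε • z)
        = hermForm σ y y + ε * σ ε * hermForm σ z z := by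
      simp only [map_add, map_smul, map_smulₛₗ, LinearMap.add_apply, LinearMap.smul_apply,
        smul_eq_mul, hyz, hzy]
      ring
    rw [hww]
    intro h
    apply hε
    field_simp
    linear_combination h
  · simp only [map_add, map_smulₛₗ, smul_eq_mul, hxy, hxz, mul_zero, add_zero]
  · simpa only [map_add, map_smulₛₗ, smul_eq_mul, hyz, mul_zero, add_zero] using hy
  · intro h
    obtain ⟨a, ha⟩ := Submodule.mem_span_singleton.mp h
    have hpair := congrArg (fun v => hermForm σ v z) ha
    simp only [map_add, map_smul, LinearMap.add_apply, LinearMap.smul_apply, smul_eq_mul,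
      hyz, mul_zero, zero_add] at hpair
    exact mul_ne_zero hε0 hzz hpair.symm

lemma exists_mirror (hσ : Function.Involutive σ) (hnorm : ∀ a : K, ∃ ε ≠ 0, ε * σ ε ≠ a)
    {x y : Fin 3 → K} (hx : hermForm σ x x ≠ 0) (hy : hermForm σ y y ≠ 0) (hxy : x ∉ K ∙ y) :
    ∃ w, hermForm σ w w ≠ 0 ∧ (hermForm σ x w = 0 ∨ w = x) ∧ hermForm σ y w ≠ 0 ∧
      w ∉ K ∙ y := by
  by_cases hyx : hermForm σ y x = 0
  · obtain ⟨w, hww, hxw, hyw, hwy⟩ := exists_mirror_of_hermForm_eq_zero hσ hnorm hx hy hyx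
    exact ⟨w, hww, Or.inl hxw, hyw, hwy⟩
  · exact ⟨x, hx, Or.inr rfl, hyx, hxy⟩

lemma exists_unitary_fixing_moving (hσ : Function.Involutive σ) {l : K} (hl1 : l ≠ 1)
    (hl : l * σ l = 1) (hnorm : ∀ a : K, ∃ ε ≠ 0, ε * σ ε ≠ a) {x y : Fin 3 → K}
    (hx : hermForm σ x x ≠ 0) (hy : hermForm σ y y ≠ 0) (hxy : x ∉ K ∙ y) :
    ∃ f : (Fin 3 → K) ≃ₗ[K] (Fin 3 → K), (∀ a b, hermForm σ (f a) (f b) = hermForm σ a b) ∧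
      f x ∈ K ∙ x ∧ f y ∉ K ∙ y := by
  obtain ⟨w, hww, hxw, hyw, hwy⟩ := exists_mirror hσ hnorm hx hy hxy
  have hr := hermForm_unitaryReflection_div hσ hww hl
  have hc : (l - 1) / hermForm σ w w ≠ 0 := div_ne_zero (sub_ne_zero.mpr hl1) hww
  refine ⟨LinearEquiv.ofInjectiveEndo _ (injective_of_preserves_hermForm hr), hr, ?_,
    unitaryReflection_apply_notMem_span hc hyw hwy⟩
  rcases hxw with hxw | rfl
  · rw [LinearEquiv.coe_ofInjectiveEndo, unitaryReflection_apply_of_hermForm_eq_zero _ hxw]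
    exact Submodule.mem_span_singleton_self x
  · rw [LinearEquiv.coe_ofInjectiveEndo, unitaryReflection_apply_self]
    exact Submodule.smul_mem _ _ (Submodule.mem_span_singleton_self _)

end Plane

section Projective

variable {F : Type} [Field F] {n : ℕ} (f : (Fin (n+1) → F) ≃ₗ[F] (Fin (n+1) → F))

lemma inducedMap_eq_mk (p : PG F n) :
    inducedMap F n f p = Projectivization.mk F (f p.rep) (f.map_ne_zero_iff.mpr p.rep_nonzero) := by
  conv_lhs => rw [← p.mk_rep]
  rfl

lemma inducedMap_eq_self_iff (p : PG F n) : inducedMap F n f p = p ↔ f p.rep ∈ F ∙ p.rep := by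
  conv_lhs => rw [inducedMap_eq_mk]; rhs; rw [← p.mk_rep]
  rw [Projectivization.mk_eq_mk_iff', Submodule.mem_span_singleton]

lemma rep_notMem_span_rep {p p' : PG F n} (h : p ≠ p') : p.rep ∉ F ∙ p'.rep := by
  rw [Submodule.mem_span_singleton]
  rintro ⟨a, ha⟩
  apply h
  rw [← p.mk_rep, ← p'.mk_rep, Projectivization.mk_eq_mk_iff']
  exact ⟨a, ha⟩

lemma inducedMap_symm_inducedMap (p : PG F n) : inducedMap F n f.symm (inducedMap F n f p) = p := by
  induction p using Projectivization.ind with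
  | h v hv => simp [inducedMap, Projectivization.map_mk]

lemma inducedMap_inducedMap_symm (p : PG F n) : inducedMap F n f (inducedMap F n f.symm p) = p := by
  simpa using inducedMap_symm_inducedMap f.symm p

lemma submodule_inducedMap (p : PG F n) :
    (inducedMap F n f p).submodule = p.submodule.map f.toLinearMap := by
  rw [inducedMap_eq_mk, Projectivization.submodule_mk, Projectivization.submodule_eq,
    Submodule.map_span, Set.image_singleton]
  rfl

noncomputable def inducedEquiv : PG F n ≃ PG F n where
  toFun := inducedMap F n f
  invFun := inducedMap F n f.symm
  left_inv := inducedMap_symm_inducedMap f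
  right_inv := inducedMap_inducedMap_symm f

lemma coe_inducedEquiv : ⇑(inducedEquiv f) = inducedMap F n f := rfl

lemma span_rep_pair (p p' : PG F n) :
    Submodule.span F {p.rep, p'.rep} = p.submodule ⊔ p'.submodule := by
  rw [Submodule.span_insert, Projectivization.submodule_eq, Projectivization.submodule_eq]

lemma lineSet_map (W : Submodule F (Fin (n+1) → F)) :
    lineSet F n (W.map f.toLinearMap) = inducedEquiv f '' lineSet F n W := by
  ext p
  rw [Equiv.image_eq_preimage_symm, Set.mem_preimage]
  conv_lhs => rw [← (inducedEquiv f).apply_symm_apply p]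
  simp only [lineSet, Set.mem_ofPred_eq, coe_inducedEquiv, submodule_inducedMap]
  exact Submodule.map_le_map_iff_of_injective f.injective _ _

lemma isTangent_map_iff {q : ℕ} (hf : inducedMap F n f '' Herm F q n = Herm F q n)
    (W : Submodule F (Fin (n+1) → F)) :
    IsTangent F q n (W.map f.toLinearMap) ↔ IsTangent F q n W := by
  have hinter : lineSet F n (W.map f.toLinearMap) ∩ Herm F q n
      = inducedEquiv f '' (lineSet F n W ∩ Herm F q n) := by
    rw [Set.image_inter (inducedEquiv f).injective, ← lineSet_map, coe_inducedEquiv, hf]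
  rw [IsTangent, IsTangent, IsLine, IsLine, LinearEquiv.finrank_map_eq, hinter,
    Set.ncard_image_of_injective _ (inducedEquiv f).injective]

lemma inducedMap_mem_iff_of_image_eq {S : Set (PG F n)} (hf : inducedMap F n f '' S = S)
    (p : PG F n) : inducedMap F n f p ∈ S ↔ p ∈ S := by
  conv_lhs => rw [← hf]
  exact (inducedEquiv f).injective.mem_set_image

noncomputable def NU.inducedIso {q : ℕ} (hf : inducedMap F n f '' Herm F q n = Herm F q n) :
    NU F q n ≃g NU F q n where
  toEquiv := (inducedEquiv f).subtypeEquiv fun p => (inducedMap_mem_iff_of_image_eq f hf p).not.symm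
  map_rel_iff' {u v} := by
    show _ ∧ _ ↔ _ ∧ _
    refine and_congr ((inducedEquiv f).subtypeEquiv _).injective.ne_iff ?_
    show IsTangent F q n (Submodule.span F {(inducedMap F n f u).rep, (inducedMap F n f v).rep}) ↔ _
    rw [span_rep_pair, span_rep_pair, submodule_inducedMap, submodule_inducedMap,
      ← Submodule.map_sup, isTangent_map_iff f hf]

lemma NU.inducedIso_apply {q : ℕ} (hf : inducedMap F n f '' Herm F q n = Herm F q n)
    (u : {p : PG F n // p ∉ Herm F q n}) : (NU.inducedIso f hf u : PG F n) = inducedMap F n f u :=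
  rfl

end Projective

section HermitianCurve

variable {F : Type} [Field F] {q n : ℕ} {σ : F →+* F}

lemma mem_herm_iff (hσ : ∀ x, σ x = x ^ q) (p : PG F n) :
    p ∈ Herm F q n ↔ hermForm σ p.rep p.rep = 0 := by
  simp [Herm, hermForm_apply, hσ, pow_succ']

lemma inducedMap_mem_herm_iff (hσ : ∀ x, σ x = x ^ q) {f : (Fin (n+1) → F) ≃ₗ[F] (Fin (n+1) → F)}
    (hf : ∀ x, hermForm σ (f x) (f x) = hermForm σ x x) (p : PG F n) :
    inducedMap F n f p ∈ Herm F q n ↔ p ∈ Herm F q n := by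
  obtain ⟨a, ha⟩ := Projectivization.exists_smul_eq_mk_rep F (f p.rep)
    (f.map_ne_zero_iff.mpr p.rep_nonzero)
  rw [mem_herm_iff hσ, mem_herm_iff hσ, inducedMap_eq_mk, ← ha, Units.smul_def,
    hermForm_smul_smul_eq_zero_iff a.ne_zero, hf]

lemma image_inducedMap_herm (hσ : ∀ x, σ x = x ^ q)
    {f : (Fin (n+1) → F) ≃ₗ[F] (Fin (n+1) → F)}
    (hf : ∀ x, hermForm σ (f x) (f x) = hermForm σ x x) :
    inducedMap F n f '' Herm F q n = Herm F q n := by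
  ext p
  rw [← coe_inducedEquiv, Equiv.image_eq_preimage_symm, Set.mem_preimage]
  conv_rhs => rw [← (inducedEquiv f).apply_symm_apply p]
  exact (inducedMap_mem_herm_iff hσ hf _).symm

end HermitianCurve

lemma exists_unitary_fixing_moving_point {F : Type} [Field F] {σ : F →+* F}
    (hσ : Function.Involutive σ) {l : F} (hl1 : l ≠ 1) (hl : l * σ l = 1)
    (hnorm : ∀ a : F, ∃ ε ≠ 0, ε * σ ε ≠ a) {p p' : PG F 2}
    (hp : hermForm σ p.rep p.rep ≠ 0) (hp' : hermForm σ p'.rep p'.rep ≠ 0) (hne : p ≠ p') :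
    ∃ f : (Fin 3 → F) ≃ₗ[F] (Fin 3 → F), (∀ a b, hermForm σ (f a) (f b) = hermForm σ a b) ∧
      inducedMap F 2 f p = p ∧ inducedMap F 2 f p' ≠ p' := by
  obtain ⟨f, hf, hfix, hmove⟩ :=
    exists_unitary_fixing_moving hσ hl1 hl hnorm hp hp' (rep_notMem_span_rep hne)
  exact ⟨f, hf, (inducedMap_eq_self_iff f p).mpr hfix,
    fun h => hmove ((inducedMap_eq_self_iff f p').mp h)⟩

section FiniteField

variable {F : Type*} [Field F] [Fintype F] {q : ℕ}

lemma exists_ringHom_eq_pow_of_dvd_card (hq : q ∣ Fintype.card F) :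
    ∃ σ : F →+* F, ∀ x, σ x = x ^ q := by
  obtain ⟨p, hchar, n, hp, hcard⟩ := FiniteField.card' F
  have : Fact p.Prime := ⟨hp⟩
  rw [hcard] at hq
  obtain ⟨m, -, rfl⟩ := (Nat.dvd_prime_pow hp).mp hq
  exact ⟨iterateFrobenius F p m, fun _ => rfl⟩

lemma pow_pow_of_card_eq_sq (hF : Fintype.card F = q ^ 2) (x : F) : (x ^ q) ^ q = x := by
  rw [← pow_mul, ← sq, ← hF, FiniteField.pow_card]

lemma exists_orderOf_eq_of_card_eq_sq (hF : Fintype.card F = q ^ 2) :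
    ∃ g : Fˣ, orderOf g = q ^ 2 - 1 := by
  obtain ⟨g, hg⟩ := IsCyclic.exists_ofOrder_eq_natCard (α := Fˣ)
  exact ⟨g, by rw [hg, Nat.card_units, Nat.card_eq_fintype_card, hF]⟩

lemma exists_ne_one_pow_succ_eq_one (hq : 1 < q) (hF : Fintype.card F = q ^ 2) :
    ∃ l : F, l ≠ 1 ∧ l ^ (q + 1) = 1 := by
  obtain ⟨g, hg⟩ := exists_orderOf_eq_of_card_eq_sq hF
  have hfac : q ^ 2 - 1 = (q - 1) * (q + 1) := by
    rw [mul_comm, ← Nat.sq_sub_sq, one_pow]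
  refine ⟨((g ^ (q - 1) : Fˣ) : F), ?_, ?_⟩
  · rw [Ne, Units.val_eq_one]
    refine pow_ne_one_of_lt_orderOf (by omega) ?_
    rw [hg, hfac]
    exact lt_mul_of_one_lt_right (by omega) (by omega)
  · rw [← Units.val_pow_eq_pow_val, ← pow_mul, ← hfac, ← hg, pow_orderOf_eq_one, Units.val_one]

lemma exists_pow_succ_ne (hq : 2 < q) (hF : Fintype.card F = q ^ 2) (a : F) :
    ∃ ε : F, ε ≠ 0 ∧ ε ^ (q + 1) ≠ a := by
  obtain ⟨g, hg⟩ := exists_orderOf_eq_of_card_eq_sq hF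
  have hg1 : (g : F) ^ (q + 1) ≠ 1 := by
    rw [← Units.val_pow_eq_pow_val, Ne, Units.val_eq_one]
    refine pow_ne_one_of_lt_orderOf (by omega) ?_
    rw [hg]
    have : q + 2 < q ^ 2 := by nlinarith
    omega
  by_cases ha : a = 1
  · exact ⟨g, g.ne_zero, ha ▸ hg1⟩
  · exact ⟨1, one_ne_zero, by rwa [one_pow, ne_comm]⟩

end FiniteField

theorem centralizer_of_linear_auts_trivial (q : ℕ) (hq2 : 2 < q)
    (hF : Fintype.card F = q ^ 2)
    (g : NU F q 2 ≃g NU F q 2)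
    (hcomm : ∀ h : NU F q 2 ≃g NU F q 2,
      (∃ f : (Fin 3 → F) ≃ₗ[F] (Fin 3 → F),
        inducedMap F 2 f '' Herm F q 2 = Herm F q 2 ∧
        ∀ u : {p : PG F 2 // p ∉ Herm F q 2}, (h u : PG F 2) = inducedMap F 2 f ↑u) →
      ∀ u, g (h u) = h (g u)) :
    ∀ u, g u = u := by
  intro u
  by_contra hgu
  obtain ⟨σ, hσ⟩ := exists_ringHom_eq_pow_of_dvd_card (hF ▸ dvd_pow_self q two_ne_zero)
  have hinv : Function.Involutive σ := fun x => by rw [hσ, hσ, pow_pow_of_card_eq_sq hF]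
  obtain ⟨l, hl1, hl⟩ := exists_ne_one_pow_succ_eq_one (by omega) hF
  have hnorm (a : F) : ∃ ε ≠ 0, ε * σ ε ≠ a := by
    simpa only [hσ, ← pow_succ'] using exists_pow_succ_ne hq2 hF a
  have hnonisotropic (v : {p : PG F 2 // p ∉ Herm F q 2}) : hermForm σ v.1.rep v.1.rep ≠ 0 :=
    (mem_herm_iff hσ v.1).not.mp v.2
  obtain ⟨f, hf, hfix, hmove⟩ := exists_unitary_fixing_moving_point hinv hl1
    (by rwa [hσ, ← pow_succ']) hnorm (hnonisotropic u) (hnonisotropic (g u))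
    (fun h => hgu (Subtype.ext h).symm)
  have hH := image_inducedMap_herm hσ fun x => hf x x
  have hcomm_u := hcomm (NU.inducedIso f hH) ⟨f, hH, NU.inducedIso_apply f hH⟩ u
  rw [show NU.inducedIso f hH u = u from Subtype.ext hfix] at hcomm_u
  exact hmove (congrArg Subtype.val hcomm_u).symm
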